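/- Let 0<q<1, let a₁,…,a_r and b₁,…,b_s be real numbers in [0,1), and let k be a natural number. Then | (∏_{j=1}^s (b_j q^k; q)_∞) · (∏_{j=1}^r 1/(a_j q^k; q)_∞) − 1 | ≤ (2/(1−q))^{r+s} · ( ∏_{j=1}^s (−b_j q²; q)_∞ ) · q^k / ( ∏_{j=1}^r (a_j; q)_∞ ). -/

import Mathlib

/-!
Put `t = q ^ k ≤ 1`. By the Weierstrass inequality `∏ (1 - x_i) ≥ 1 - ∑ x_i`, every
`(b q^k; q)_∞` lies in `[1 - t / (1 - q), 1]`; and since `(a; q)_∞ ≤ (a q^k; q)_∞`,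
`(a q^k; q)_∞⁻¹ - 1 = (1 - (a q^k; q)_∞) / (a q^k; q)_∞ ≤ t / ((1 - q) (a; q)_∞)`.
So each of the `r + s` factors `x` satisfies `|x - 1| ≤ t (C - 1)` with `C = 2 / (1 - q)`,
resp. `C = 2 / ((1 - q) (a; q)_∞)`, and such bounds multiply: `|∏ x - 1| ≤ t (∏ C - 1)`.
The remaining factor `∏ (-b_j q²; q)_∞` is at least `1`.
-/

/-- The infinite q-Pochhammer symbol `(a; q)_∞ = ∏_{j=0}^∞ (1 - a q^j)`. -/
noncomputable def qPochInf (a q : ℝ) : ℝ := ∏' j : ℕ, (1 - a * q ^ j)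

open Finset Real

section OneSub

variable {ι : Type*} {x y : ι → ℝ}

theorem Finset.one_sub_sum_le_prod_one_sub (s : Finset ι) (h0 : ∀ i ∈ s, 0 ≤ x i)
    (h1 : ∀ i ∈ s, x i ≤ 1) : 1 - ∑ i ∈ s, x i ≤ ∏ i ∈ s, (1 - x i) := by
  classical
  induction s using Finset.induction_on with
  | empty => simp
  | insert i s hi ih =>
    rw [prod_insert hi, sum_insert hi]
    have hxi0 := h0 i (mem_insert_self i s)
    have hxi1 := h1 i (mem_insert_self i s)
    have ih := ih (fun j hj => h0 j (mem_insert_of_mem hj)) fun j hj => h1 j (mem_insert_of_mem hj)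
    have hsum : 0 ≤ ∑ j ∈ s, x j := sum_nonneg fun j hj => h0 j (mem_insert_of_mem hj)
    nlinarith

theorem summable_log_one_sub (hx : Summable x) : Summable fun i => log (1 - x i) := by
  simpa only [sub_eq_add_neg] using Real.summable_log_one_add_of_summable hx.neg

theorem multipliable_one_sub (hx : Summable x) : Multipliable fun i => 1 - x i := by
  simpa only [sub_eq_add_neg] using Real.multipliable_one_add_of_summable hx.neg

theorem tprod_one_sub_eq_exp_tsum_log (hx : Summable x) (h1 : ∀ i, x i < 1) :
    ∏' i, (1 - x i) = exp (∑' i, log (1 - x i)) :=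
  (rexp_tsum_eq_tprod (fun i => sub_pos.2 (h1 i)) (summable_log_one_sub hx)).symm

theorem tprod_one_sub_pos (hx : Summable x) (h1 : ∀ i, x i < 1) : 0 < ∏' i, (1 - x i) := by
  rw [tprod_one_sub_eq_exp_tsum_log hx h1]
  exact exp_pos _

theorem tprod_one_sub_le_one (hx : Summable x) (h0 : ∀ i, 0 ≤ x i) (h1 : ∀ i, x i < 1) :
    ∏' i, (1 - x i) ≤ 1 := by
  rw [tprod_one_sub_eq_exp_tsum_log hx h1, exp_le_one_iff]
  exact tsum_nonpos fun i => log_nonpos (by linarith [h1 i]) (by linarith [h0 i])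

theorem one_le_tprod_one_sub (hx : Summable x) (h0 : ∀ i, x i ≤ 0) :
    1 ≤ ∏' i, (1 - x i) := by
  rw [tprod_one_sub_eq_exp_tsum_log hx fun i => (h0 i).trans_lt one_pos, one_le_exp_iff]
  exact tsum_nonneg fun i => log_nonneg (by linarith [h0 i])

theorem tprod_one_sub_le_tprod_one_sub (hx : Summable x) (hy : Summable y)
    (hxy : ∀ i, x i ≤ y i) (hy1 : ∀ i, y i < 1) :
    ∏' i, (1 - y i) ≤ ∏' i, (1 - x i) := by
  have hx1 i : x i < 1 := (hxy i).trans_lt (hy1 i)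
  rw [tprod_one_sub_eq_exp_tsum_log hx hx1, tprod_one_sub_eq_exp_tsum_log hy hy1, exp_le_exp]
  exact (summable_log_one_sub hy).tsum_le_tsum
    (fun i => log_le_log (sub_pos.2 (hy1 i)) (by linarith [hxy i])) (summable_log_one_sub hx)

theorem one_sub_tsum_le_tprod_one_sub (hx : Summable x) (h0 : ∀ i, 0 ≤ x i)
    (h1 : ∀ i, x i ≤ 1) : 1 - ∑' i, x i ≤ ∏' i, (1 - x i) :=
  ge_of_tendsto (multipliable_one_sub hx).hasProd <| Filter.Eventually.of_forall fun s =>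
    (sub_le_sub_left (hx.sum_le_tsum s fun i _ => h0 i) 1).trans
      (s.one_sub_sum_le_prod_one_sub (fun i _ => h0 i) fun i _ => h1 i)

end OneSub

section QPochhammer

variable {a q : ℝ}

theorem summable_mul_geometric (hq0 : 0 ≤ q) (hq1 : q < 1) (a : ℝ) :
    Summable fun j : ℕ => a * q ^ j :=
  (summable_geometric_of_lt_one hq0 hq1).mul_left a

theorem mul_pow_le_self (hq0 : 0 ≤ q) (hq1 : q ≤ 1) (ha : 0 ≤ a) (j : ℕ) :
    a * q ^ j ≤ a :=
  mul_le_of_le_one_right ha (pow_le_one₀ hq0 hq1)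

theorem mul_pow_mem_Ico (hq0 : 0 ≤ q) (hq1 : q ≤ 1) (ha : a ∈ Set.Ico 0 1) (k : ℕ) :
    a * q ^ k ∈ Set.Ico 0 1 :=
  ⟨mul_nonneg ha.1 (pow_nonneg hq0 k), (mul_pow_le_self hq0 hq1 ha.1 k).trans_lt ha.2⟩

theorem qPochInf_pos (hq0 : 0 ≤ q) (hq1 : q < 1) (ha : a ∈ Set.Ico 0 1) : 0 < qPochInf a q :=
  tprod_one_sub_pos (summable_mul_geometric hq0 hq1 a) fun j =>
    (mul_pow_mem_Ico hq0 hq1.le ha j).2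

theorem qPochInf_le_one (hq0 : 0 ≤ q) (hq1 : q < 1) (ha : a ∈ Set.Ico 0 1) :
    qPochInf a q ≤ 1 :=
  tprod_one_sub_le_one (summable_mul_geometric hq0 hq1 a)
    (fun j => (mul_pow_mem_Ico hq0 hq1.le ha j).1) fun j => (mul_pow_mem_Ico hq0 hq1.le ha j).2

theorem one_le_qPochInf_neg (hq0 : 0 ≤ q) (hq1 : q < 1) (ha : 0 ≤ a) : 1 ≤ qPochInf (-a) q :=
  one_le_tprod_one_sub (summable_mul_geometric hq0 hq1 (-a))
    fun j => mul_nonpos_of_nonpos_of_nonneg (neg_nonpos.2 ha) (pow_nonneg hq0 j)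

theorem one_sub_div_le_qPochInf (hq0 : 0 ≤ q) (hq1 : q < 1) (ha : a ∈ Set.Icc 0 1) :
    1 - a / (1 - q) ≤ qPochInf a q := by
  have h := one_sub_tsum_le_tprod_one_sub (summable_mul_geometric hq0 hq1 a)
    (fun j => mul_nonneg ha.1 (pow_nonneg hq0 j))
    fun j => (mul_pow_le_self hq0 hq1.le ha.1 j).trans ha.2
  rwa [tsum_mul_left, tsum_geometric_of_lt_one hq0 hq1, ← div_eq_mul_inv] at h

theorem qPochInf_le_qPochInf_mul_pow (hq0 : 0 ≤ q) (hq1 : q < 1) (ha : a ∈ Set.Ico 0 1)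
    (k : ℕ) : qPochInf a q ≤ qPochInf (a * q ^ k) q :=
  tprod_one_sub_le_tprod_one_sub (summable_mul_geometric hq0 hq1 _)
    (summable_mul_geometric hq0 hq1 a)
    (fun j => mul_le_mul_of_nonneg_right (mul_pow_le_self hq0 hq1.le ha.1 k) (pow_nonneg hq0 j))
    fun j => (mul_pow_mem_Ico hq0 hq1.le ha j).2

theorem one_sub_qPochInf_mul_pow_le (hq0 : 0 ≤ q) (hq1 : q < 1) (ha : a ∈ Set.Ico 0 1)
    (k : ℕ) : 1 - qPochInf (a * q ^ k) q ≤ q ^ k * (1 - q)⁻¹ := by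
  have hak : a * q ^ k ≤ q ^ k := mul_le_of_le_one_left (pow_nonneg hq0 k) ha.2.le
  have h := one_sub_div_le_qPochInf hq0 hq1
    (Set.Ico_subset_Icc_self (mul_pow_mem_Ico hq0 hq1.le ha k))
  calc 1 - qPochInf (a * q ^ k) q ≤ a * q ^ k / (1 - q) := by linarith
    _ ≤ q ^ k * (1 - q)⁻¹ := div_le_div_of_nonneg_right hak (sub_nonneg.2 hq1.le)

theorem one_le_inv_one_sub_mul_qPochInf (hq0 : 0 ≤ q) (hq1 : q < 1) (ha : a ∈ Set.Ico 0 1) :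
    1 ≤ ((1 - q) * qPochInf a q)⁻¹ :=
  (one_le_inv₀ (mul_pos (sub_pos.2 hq1) (qPochInf_pos hq0 hq1 ha))).2 <|
    mul_le_one₀ (by linarith) (qPochInf_pos hq0 hq1 ha).le (qPochInf_le_one hq0 hq1 ha)

theorem abs_qPochInf_mul_pow_sub_one_le (hq0 : 0 ≤ q) (hq1 : q < 1) (ha : a ∈ Set.Ico 0 1)
    (k : ℕ) : |qPochInf (a * q ^ k) q - 1| ≤ q ^ k * (2 * (1 - q)⁻¹ - 1) := by
  have hc : 1 ≤ (1 - q)⁻¹ := (one_le_inv₀ (sub_pos.2 hq1)).2 (by linarith)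
  rw [abs_sub_comm, abs_of_nonneg
    (sub_nonneg.2 (qPochInf_le_one hq0 hq1 (mul_pow_mem_Ico hq0 hq1.le ha k)))]
  calc 1 - qPochInf (a * q ^ k) q ≤ q ^ k * (1 - q)⁻¹ :=
        one_sub_qPochInf_mul_pow_le hq0 hq1 ha k
    _ ≤ q ^ k * (2 * (1 - q)⁻¹ - 1) :=
        mul_le_mul_of_nonneg_left (by linarith) (pow_nonneg hq0 k)

theorem abs_inv_qPochInf_mul_pow_sub_one_le (hq0 : 0 ≤ q) (hq1 : q < 1) (ha : a ∈ Set.Ico 0 1)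
    (k : ℕ) :
    |(qPochInf (a * q ^ k) q)⁻¹ - 1| ≤ q ^ k * (2 * ((1 - q) * qPochInf a q)⁻¹ - 1) := by
  have hA := qPochInf_pos hq0 hq1 ha
  have hmono := qPochInf_le_qPochInf_mul_pow hq0 hq1 ha k
  have hA' := hA.trans_le hmono
  have hc := one_le_inv_one_sub_mul_qPochInf hq0 hq1 ha
  rw [abs_of_nonneg (sub_nonneg.2 ((one_le_inv₀ hA').2
    (qPochInf_le_one hq0 hq1 (mul_pow_mem_Ico hq0 hq1.le ha k))))]
  calc (qPochInf (a * q ^ k) q)⁻¹ - 1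
        = (1 - qPochInf (a * q ^ k) q) / qPochInf (a * q ^ k) q := by field_simp
    _ ≤ q ^ k * (1 - q)⁻¹ / qPochInf a q :=
        div_le_div₀ (by have := pow_nonneg hq0 k; positivity)
          (one_sub_qPochInf_mul_pow_le hq0 hq1 ha k) hA hmono
    _ = q ^ k * ((1 - q) * qPochInf a q)⁻¹ := by rw [mul_inv, mul_div_assoc, div_eq_mul_inv]
    _ ≤ q ^ k * (2 * ((1 - q) * qPochInf a q)⁻¹ - 1) :=
        mul_le_mul_of_nonneg_left (by linarith) (pow_nonneg hq0 k)

end QPochhammer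

section ProdSubOne

variable {t : ℝ}

theorem abs_mul_sub_one_le {x y U V : ℝ} (ht0 : 0 ≤ t) (ht1 : t ≤ 1) (hU : 1 ≤ U)
    (hV : 1 ≤ V) (hx : |x - 1| ≤ t * (U - 1)) (hy : |y - 1| ≤ t * (V - 1)) :
    |x * y - 1| ≤ t * (U * V - 1) := by
  have hUV : 0 ≤ (U - 1) * (V - 1) := mul_nonneg (sub_nonneg.2 hU) (sub_nonneg.2 hV)
  have hxy : |(x - 1) * (y - 1)| ≤ t * ((U - 1) * (V - 1)) := by
    rw [abs_mul]
    calc |x - 1| * |y - 1| ≤ (t * (U - 1)) * (t * (V - 1)) :=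
          mul_le_mul hx hy (abs_nonneg _) (mul_nonneg ht0 (sub_nonneg.2 hU))
      _ ≤ t * ((U - 1) * (V - 1)) := by
          nlinarith [mul_nonneg (sub_nonneg.2 ht1) (mul_nonneg ht0 hUV)]
  calc |x * y - 1| = |(x - 1) * (y - 1) + (x - 1) + (y - 1)| := by ring_nf
    _ ≤ |(x - 1) * (y - 1)| + |x - 1| + |y - 1| := abs_add_three _ _ _
    _ ≤ t * (U * V - 1) := by linarith

theorem Finset.abs_prod_sub_one_le {ι : Type*} (s : Finset ι) {x C : ι → ℝ} (ht0 : 0 ≤ t)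
    (ht1 : t ≤ 1) (hC : ∀ i ∈ s, 1 ≤ C i) (h : ∀ i ∈ s, |x i - 1| ≤ t * (C i - 1)) :
    |∏ i ∈ s, x i - 1| ≤ t * (∏ i ∈ s, C i - 1) := by
  classical
  induction s using Finset.induction_on with
  | empty => simp
  | insert i s hi ih =>
    rw [prod_insert hi, prod_insert hi]
    have hCs j (hj : j ∈ s) : 1 ≤ C j := hC j (mem_insert_of_mem hj)
    exact abs_mul_sub_one_le ht0 ht1 (hC i (mem_insert_self i s)) (one_le_prod hCs)
      (h i (mem_insert_self i s)) (ih hCs fun j hj => h j (mem_insert_of_mem hj))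

end ProdSubOne

theorem stmt11 (q : ℝ) (hq0 : 0 < q) (hq1 : q < 1) (r s : ℕ)
    (a : Fin r → ℝ) (b : Fin s → ℝ)
    (ha : ∀ j, a j ∈ Set.Ico (0 : ℝ) 1) (hb : ∀ j, b j ∈ Set.Ico (0 : ℝ) 1) (k : ℕ) :
    |(∏ j, qPochInf (b j * q ^ k) q) * (∏ j, (qPochInf (a j * q ^ k) q)⁻¹) - 1|
      ≤ (2 / (1 - q)) ^ (r + s) * (∏ j, qPochInf (-(b j * q ^ 2)) q) * q ^ k
          / ∏ j, qPochInf (a j) q := by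
  have hq : 0 < 1 - q := sub_pos.2 hq1
  have hqk0 : 0 ≤ q ^ k := pow_nonneg hq0.le k
  have hqk1 : q ^ k ≤ 1 := pow_le_one₀ hq0.le hq1.le
  have hA : 0 < ∏ j, qPochInf (a j) q := prod_pos fun j _ => qPochInf_pos hq0.le hq1 (ha j)
  have hB : 1 ≤ ∏ j, qPochInf (-(b j * q ^ 2)) q := one_le_prod fun j _ =>
    one_le_qPochInf_neg hq0.le hq1 (mul_nonneg (hb j).1 (pow_nonneg hq0.le 2))
  set Cb : ℝ := 2 * (1 - q)⁻¹
  set Ca : Fin r → ℝ := fun j => 2 * ((1 - q) * qPochInf (a j) q)⁻¹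
  have hCb : 1 ≤ Cb := by linarith [(one_le_inv₀ hq).2 (by linarith : 1 - q ≤ 1)]
  have hCa j : 1 ≤ Ca j := by linarith [one_le_inv_one_sub_mul_qPochInf hq0.le hq1 (ha j)]
  have hX := univ.abs_prod_sub_one_le hqk0 hqk1 (fun _ _ => hCb)
    fun j _ => abs_qPochInf_mul_pow_sub_one_le hq0.le hq1 (hb j) k
  have hY := univ.abs_prod_sub_one_le hqk0 hqk1 (fun j _ => hCa j)
    fun j _ => abs_inv_qPochInf_mul_pow_sub_one_le hq0.le hq1 (ha j) k
  calc _ ≤ q ^ k * ((∏ _j : Fin s, Cb) * (∏ j, Ca j) - 1) :=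
        abs_mul_sub_one_le hqk0 hqk1 (one_le_prod fun _ _ => hCb) (one_le_prod fun j _ => hCa j)
          hX hY
    _ ≤ q ^ k * ((∏ _j : Fin s, Cb) * ∏ j, Ca j) :=
        mul_le_mul_of_nonneg_left (sub_le_self _ zero_le_one) hqk0
    _ = (2 / (1 - q)) ^ (r + s) * 1 * q ^ k / ∏ j, qPochInf (a j) q := by
        simp only [Cb, Ca, prod_const, card_univ, Fintype.card_fin, prod_mul_distrib, mul_inv,
          prod_inv_distrib]
        field_simp
        ring
    _ ≤ _ := div_le_div_of_nonneg_right (mul_le_mul_of_nonneg_right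
        (mul_le_mul_of_nonneg_left hB (pow_pos (div_pos two_pos hq) _).le) hqk0) hA.le
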